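/- arXiv:1907.05502 — 2 statements merged into one kernel-verified Lean document; each statement's English description precedes it below -/
import Mathlib

section
/- Let (A_n)_{n∈ℕ} be any sequence of subsets of ℕ. Then there exists a sequence a in the class S such that for every n ∈ ℕ, B̄d(A_n) ≤ e·d̄_a(A_n), where e is Euler's number. -/
open Filter Topology

/-- The weighted sum `∑_{j=0}^{N} a_j · 1_A(j)`. -/
noncomputable def wSum (a : ℕ → ℝ) (A : Set ℕ) (N : ℕ) : ℝ :=
  ∑ j ∈ Finset.range (N + 1), Set.indicator A a j

/-- The upper `a`-density `d̄_a(A)`. -/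
noncomputable def upperDensWith (a : ℕ → ℝ) (A : Set ℕ) : ℝ :=
  Filter.limsup (fun N => wSum a A N / ∑ j ∈ Finset.range (N + 1), a j) Filter.atTop

/-- The lower `a`-density `d_a(A)`. -/
noncomputable def lowerDensWith (a : ℕ → ℝ) (A : Set ℕ) : ℝ :=
  Filter.liminf (fun N => wSum a A N / ∑ j ∈ Finset.range (N + 1), a j) Filter.atTop

/-- The (unweighted) upper density `d̄(A)`. -/
noncomputable def upperDens (A : Set ℕ) : ℝ :=
  Filter.limsup
    (fun N : ℕ => (∑ j ∈ Finset.range (N + 1), Set.indicator A (fun _ => (1 : ℝ)) j) / (N + 1))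
    Filter.atTop

/-- The upper Banach density `B̄d(A) = lim_N b_N / N`, `b_N = limsup_k #(A ∩ [k+1, k+N])`
(the limit exists, so it coincides with the limsup used here). -/
noncomputable def upperBanachDens (A : Set ℕ) : ℝ :=
  Filter.limsup
    (fun N : ℕ =>
      (Filter.limsup
          (fun k : ℕ => ∑ j ∈ Finset.Icc (k + 1) (k + N), Set.indicator A (fun _ => (1 : ℝ)) j)
          Filter.atTop) / (N : ℝ))
    Filter.atTop

/-- `v_n(a) = a_n / ∑_{j=0}^{n-1} a_j`. -/
noncomputable def vSeq (a : ℕ → ℝ) (n : ℕ) : ℝ := a n / ∑ j ∈ Finset.range n, a j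

/-- The class `S` of weights: positive non-decreasing sequences tending to `+∞` such that
`(v_n(a))_{n ≥ 1}` is non-increasing and tends to `0`. -/
def memS (a : ℕ → ℝ) : Prop :=
  (∀ n, 0 < a n) ∧ Monotone a ∧ Filter.Tendsto a Filter.atTop Filter.atTop ∧
    (∀ m n : ℕ, 1 ≤ m → m ≤ n → vSeq a n ≤ vSeq a m) ∧
    Filter.Tendsto (vSeq a) Filter.atTop (nhds 0)

/-- `A - k = {n : n + k ∈ A}`. -/
def shiftSet (A : Set ℕ) (k : ℕ) : Set ℕ := {n : ℕ | n + k ∈ A}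

/-- A set of natural numbers has bounded gaps (is syndetic). -/
def Syndetic (K : Set ℕ) : Prop := ∃ m : ℕ, ∀ n : ℕ, (K ∩ Set.Icc n (n + m)).Nonempty

/-- The return set `N(x, U) = {n : T^n x ∈ U}`. -/
def retSet {X : Type*} [NormedAddCommGroup X] [NormedSpace ℂ X] (T : X →L[ℂ] X) (x : X)
    (U : Set X) : Set ℕ :=
  {n : ℕ | (T ^ n) x ∈ U}

/-- The set of hypercyclic vectors of `T`. -/
def HCSet {X : Type*} [NormedAddCommGroup X] [NormedSpace ℂ X] (T : X →L[ℂ] X) : Set X :=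
  {x : X | Dense (Set.range fun n : ℕ => (T ^ n) x)}

/-- The set of `U`-frequently hypercyclic vectors of `T`. -/
def UFHCSet {X : Type*} [NormedAddCommGroup X] [NormedSpace ℂ X] (T : X →L[ℂ] X) : Set X :=
  {x : X | ∀ U : Set X, IsOpen U → U.Nonempty → 0 < upperDens (retSet T x U)}

/-- The set of `U`-frequently hypercyclic vectors of `T` with respect to the weight `a`. -/
def UFHCaSet {X : Type*} [NormedAddCommGroup X] [NormedSpace ℂ X] (a : ℕ → ℝ)
    (T : X →L[ℂ] X) : Set X :=
  {x : X | ∀ U : Set X, IsOpen U → U.Nonempty → 0 < upperDensWith a (retSet T x U)}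

/-- The set of reiteratively hypercyclic vectors of `T`. -/
def RHCSet {X : Type*} [NormedAddCommGroup X] [NormedSpace ℂ X] (T : X →L[ℂ] X) : Set X :=
  {x : X | ∀ U : Set X, IsOpen U → U.Nonempty → 0 < upperBanachDens (retSet T x U)}

/-- `T` is `𝒜`-hypercyclic. -/
def AHC {X : Type*} [NormedAddCommGroup X] [NormedSpace ℂ X] (𝒜 : Set (Set ℕ))
    (T : X →L[ℂ] X) : Prop :=
  ∃ x : X, ∀ U : Set X, IsOpen U → U.Nonempty → retSet T x U ∈ 𝒜

/-- The `n`-fold product `T × ⋯ × T` acting diagonally on `Fin n → X`. -/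
noncomputable def nfold {X : Type*} [NormedAddCommGroup X] [NormedSpace ℂ X] (T : X →L[ℂ] X)
    (n : ℕ) : (Fin n → X) →L[ℂ] (Fin n → X) :=
  ContinuousLinearMap.pi fun i => T.comp (ContinuousLinearMap.proj i)

/-!
For `t ≥ 1` let `b_t = limsup_k #(A ∩ (k, k + t])`; splitting a long window into windows of
length `t` shows `B̄d(A) ≤ b_t / t`. Choose `M` growing so fast that the block `[M_t, M_{t+1})` has
length at least `(t + 1)^3` and contains, for every `n < t`, a window `(k, k + t]` on which `A_n`
has more than `b_t - 1` elements. Put `v_j = 1/t` on block `t` and `a_0 = 1`,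
`a_j = v_j ∏_{0 < i < j} (1 + v_i)`, so that `∑_{i ≤ j} a_i = ∏_{0 < i ≤ j} (1 + v_i)` and
`v_j(a) = v_j`. Along such a window the partial sums grow only by `(1 + 1/t)^t ≤ e`, while every
weight in it is at least `1/t` times the partial sum before the window; hence the `a`-density
at the end of the window is at least `(b_t - 1) / (t e) ≥ (B̄d(A_n) - 1/t) / e`.
-/

open Finset

section WindowCount

variable (A : Set ℕ)

noncomputable def windowCount (t k : ℕ) : ℝ :=
  ∑ j ∈ Ioc k (k + t), A.indicator (fun _ => (1 : ℝ)) j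

noncomputable def limsupWindowCount (t : ℕ) : ℝ :=
  limsup (windowCount A t) atTop

lemma windowCount_nonneg (t k : ℕ) : 0 ≤ windowCount A t k :=
  sum_nonneg fun j _ => Set.indicator_nonneg (fun _ _ => zero_le_one) j

lemma windowCount_le (t k : ℕ) : windowCount A t k ≤ t :=
  calc windowCount A t k ≤ ∑ _j ∈ Ioc k (k + t), (1 : ℝ) :=
        sum_le_sum fun j _ => Set.indicator_le_self' (fun _ _ => zero_le_one) j
    _ = t := by simp

lemma windowCount_mono {t s : ℕ} (h : t ≤ s) (k : ℕ) : windowCount A t k ≤ windowCount A s k :=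
  sum_le_sum_of_subset_of_nonneg (Ioc_subset_Ioc_right (by omega))
    fun j _ _ => Set.indicator_nonneg (fun _ _ => zero_le_one) j

lemma windowCount_mul (t k q : ℕ) :
    windowCount A (q * t) k = ∑ i ∈ range q, windowCount A t (k + i * t) := by
  induction q with
  | zero => simp [windowCount]
  | succ q ih =>
    rw [sum_range_succ, ← ih, windowCount, windowCount, windowCount, ← sum_Ioc_consecutive _
      (Nat.le_add_right k (q * t)) (show k + q * t ≤ k + (q + 1) * t by nlinarith)]
    congr 2
    ring_nf

lemma isBoundedUnder_windowCount (t : ℕ) : IsBoundedUnder (· ≤ ·) atTop (windowCount A t) :=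
  isBoundedUnder_of ⟨t, windowCount_le A t⟩

lemma isCoboundedUnder_windowCount (t : ℕ) : IsCoboundedUnder (· ≤ ·) atTop (windowCount A t) :=
  isCoboundedUnder_le_of_le atTop (windowCount_nonneg A t)

lemma limsupWindowCount_nonneg (t : ℕ) : 0 ≤ limsupWindowCount A t :=
  le_limsup_of_frequently_le (Frequently.of_forall (windowCount_nonneg A t))
    (isBoundedUnder_windowCount A t)

lemma limsupWindowCount_le_mul {t : ℕ} (ht : 0 < t) (N : ℕ) :
    limsupWindowCount A N ≤ (N / t + 1 : ℕ) * limsupWindowCount A t := by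
  set q := N / t + 1
  have hq : (0 : ℝ) < q := by positivity
  refine le_of_forall_gt_imp_ge_of_dense fun c hc => ?_
  have hlt : limsupWindowCount A t < c / q := by rwa [lt_div_iff₀ hq, mul_comm]
  obtain ⟨K, hK⟩ :=
    eventually_atTop.1 (eventually_lt_of_limsup_lt hlt (isBoundedUnder_windowCount A t))
  refine limsup_le_of_le (isCoboundedUnder_windowCount A N)
    (eventually_atTop.2 ⟨K, fun k hk => ?_⟩)
  have hNq : N ≤ q * t := by have := Nat.lt_div_mul_add (a := N) ht; rw [add_mul]; omega
  calc windowCount A N k ≤ windowCount A (q * t) k := windowCount_mono A hNq k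
    _ = ∑ i ∈ range q, windowCount A t (k + i * t) := windowCount_mul A t k q
    _ ≤ ∑ _i ∈ range q, c / q := sum_le_sum fun i _ => (hK _ (by omega)).le
    _ = c := by rw [sum_const, card_range, nsmul_eq_mul, mul_div_cancel₀ _ hq.ne']

lemma upperBanachDens_eq_limsup :
    upperBanachDens A = limsup (fun N => limsupWindowCount A N / N) atTop := by
  simp only [upperBanachDens, Finset.Icc_add_one_left_eq_Ioc]
  rfl

lemma upperBanachDens_le_div {t : ℕ} (ht : 0 < t) :
    upperBanachDens A ≤ limsupWindowCount A t / t := by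
  set b := limsupWindowCount A t
  have hbound : ∀ᶠ N : ℕ in atTop, limsupWindowCount A N / N ≤ b / t + b / N := by
    filter_upwards [eventually_gt_atTop 0] with N hN
    have hNR : (0 : ℝ) < N := by exact_mod_cast hN
    rw [div_le_iff₀ hNR]
    calc limsupWindowCount A N ≤ (N / t + 1 : ℕ) * b := limsupWindowCount_le_mul A ht N
      _ ≤ ((N : ℝ) / t + 1) * b := by
          push_cast
          gcongr
          exacts [limsupWindowCount_nonneg A t, Nat.cast_div_le]
      _ = (b / t + b / N) * N := by field_simp
  have hlim : Tendsto (fun N : ℕ => b / t + b / N) atTop (𝓝 (b / t)) := by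
    simpa using tendsto_const_nhds.add (tendsto_const_div_atTop_nhds_zero_nat b)
  rw [upperBanachDens_eq_limsup, ← hlim.limsup_eq]
  exact limsup_le_limsup hbound (isCoboundedUnder_le_of_le atTop fun N =>
    div_nonneg (limsupWindowCount_nonneg A N) N.cast_nonneg) hlim.isBoundedUnder_le

end WindowCount

lemma mul_windowCount_le_wSum {a : ℕ → ℝ} (ha : Monotone a) (ha0 : ∀ n, 0 ≤ a n)
    (A : Set ℕ) (t k : ℕ) : a (k + 1) * windowCount A t k ≤ wSum a A (k + t) := by
  have hind (j : ℕ) :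
      a (k + 1) * A.indicator (fun _ => (1 : ℝ)) j = A.indicator (fun _ => a (k + 1)) j := by
    by_cases hj : j ∈ A <;> simp [hj]
  calc a (k + 1) * windowCount A t k
      = ∑ j ∈ Ioc k (k + t), A.indicator (fun _ => a (k + 1)) j := by
        rw [windowCount, mul_sum]; simp only [hind]
    _ ≤ ∑ j ∈ Ioc k (k + t), A.indicator a j :=
        sum_le_sum fun j hj => Set.indicator_le_indicator (ha (mem_Ioc.1 hj).1)
    _ ≤ wSum a A (k + t) :=
        sum_le_sum_of_subset_of_nonneg
          (fun j hj => mem_range.2 (by have := (mem_Ioc.1 hj).2; omega))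
          fun j _ _ => Set.indicator_nonneg (fun j _ => ha0 j) j

section RatioWeight

variable (v : ℕ → ℝ)

noncomputable def ratioProd (n : ℕ) : ℝ := ∏ j ∈ Ioc 0 n, (1 + v j)

noncomputable def ratioWeight : ℕ → ℝ
  | 0 => 1
  | n + 1 => v (n + 1) * ratioProd v n

lemma ratioProd_succ (n : ℕ) : ratioProd v (n + 1) = ratioProd v n * (1 + v (n + 1)) :=
  prod_Ioc_succ_top n.zero_le _

lemma sum_range_ratioWeight (n : ℕ) : ∑ j ∈ range (n + 1), ratioWeight v j = ratioProd v n := by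
  induction n with
  | zero => simp [ratioWeight, ratioProd]
  | succ n ih => rw [sum_range_succ, ih, ratioProd_succ, ratioWeight]; ring

lemma ratioProd_add_of_eqOn {k L : ℕ} {c : ℝ} (h : ∀ j ∈ Ioc k (k + L), v j = c) :
    ratioProd v (k + L) = ratioProd v k * (1 + c) ^ L := by
  rw [ratioProd, ratioProd, ← prod_Ioc_consecutive _ k.zero_le (k.le_add_right L)]
  rw [prod_congr rfl fun j hj => congrArg (1 + ·) (h j hj), prod_const, Nat.card_Ioc,
    Nat.add_sub_cancel_left]

variable {v}

lemma one_le_ratioProd (hv : ∀ n, 0 < v (n + 1)) (n : ℕ) : 1 ≤ ratioProd v n :=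
  one_le_prod fun j hj => by
    obtain ⟨i, rfl⟩ := Nat.exists_eq_add_of_le' (mem_Ioc.1 hj).1
    linarith [hv i]

lemma ratioWeight_pos (hv : ∀ n, 0 < v (n + 1)) : ∀ n, 0 < ratioWeight v n
  | 0 => one_pos
  | n + 1 => mul_pos (hv n) (zero_lt_one.trans_le (one_le_ratioProd hv n))

lemma vSeq_ratioWeight (hv : ∀ n, 0 < v (n + 1)) (n : ℕ) :
    vSeq (ratioWeight v) (n + 1) = v (n + 1) := by
  rw [vSeq, sum_range_ratioWeight, ratioWeight,
    mul_div_cancel_right₀ _ (zero_lt_one.trans_le (one_le_ratioProd hv n)).ne']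

lemma monotone_ratioWeight (hv : ∀ n, 0 < v (n + 1)) (h1 : 1 ≤ v 1)
    (hstep : ∀ n, v (n + 1) ≤ v (n + 2) * (1 + v (n + 1))) : Monotone (ratioWeight v) := by
  refine monotone_nat_of_le_succ fun n => ?_
  cases n with
  | zero => simpa [ratioWeight, ratioProd] using h1
  | succ n =>
    calc ratioWeight v (n + 1) = v (n + 1) * ratioProd v n := rfl
      _ ≤ v (n + 2) * (1 + v (n + 1)) * ratioProd v n :=
          mul_le_mul_of_nonneg_right (hstep n) (zero_le_one.trans (one_le_ratioProd hv n))
      _ = ratioWeight v (n + 2) := by rw [ratioWeight, ratioProd_succ]; ring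

lemma windowCount_div_le_wSum_div (hv : ∀ n, 0 < v (n + 1)) (hmono : Monotone (ratioWeight v))
    {t k : ℕ} (ht : 0 < t) (hwin : ∀ j ∈ Ioc k (k + t), v j = (t : ℝ)⁻¹) (A : Set ℕ) :
    windowCount A t k / (t * Real.exp 1) ≤
      wSum (ratioWeight v) A (k + t) / ∑ j ∈ range (k + t + 1), ratioWeight v j := by
  have hS := zero_lt_one.trans_le (one_le_ratioProd hv k)
  have ha : ratioWeight v (k + 1) = (t : ℝ)⁻¹ * ratioProd v k := by
    rw [ratioWeight, hwin _ (mem_Ioc.2 ⟨by omega, by omega⟩)]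
  rw [sum_range_ratioWeight, ratioProd_add_of_eqOn v hwin]
  calc windowCount A t k / (t * Real.exp 1)
      ≤ windowCount A t k / (t * (1 + (t : ℝ)⁻¹) ^ t) := by
        gcongr
        exacts [windowCount_nonneg A t k, Real.one_add_inv_pow_le_exp]
    _ = ratioWeight v (k + 1) * windowCount A t k / (ratioProd v k * (1 + (t : ℝ)⁻¹) ^ t) := by
        rw [ha]; field_simp
    _ ≤ _ := by
        gcongr
        exact mul_windowCount_le_wSum hmono (fun n => (ratioWeight_pos hv n).le) A t k

end RatioWeight

lemma le_limsup_of_eventually_exists_ge {f g : ℕ → ℝ} {c : ℝ}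
    (hf : IsBoundedUnder (· ≤ ·) atTop f) (hg : Tendsto g atTop (𝓝 c))
    (h : ∀ᶠ t in atTop, ∃ N ≥ t, g t ≤ f N) : c ≤ limsup f atTop := by
  refine le_of_forall_lt_imp_le_of_dense fun c' hc' => le_limsup_of_frequently_le ?_ hf
  refine frequently_atTop.2 fun K => ?_
  obtain ⟨t, ⟨N, hN, hgN⟩, hgt, hKt⟩ :=
    (h.and ((hg.eventually (eventually_gt_nhds hc')).and (eventually_ge_atTop K))).exists
  exact ⟨N, hKt.trans hN, hgt.le.trans hgN⟩

lemma upperBanachDens_le_exp_mul_upperDensWith {a : ℕ → ℝ} (ha : ∀ n, 0 ≤ a n) {A : Set ℕ}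
    (h : ∀ᶠ t in atTop, ∃ N ≥ t, (limsupWindowCount A t - 1) / (t * Real.exp 1) ≤
      wSum a A N / ∑ j ∈ range (N + 1), a j) :
    upperBanachDens A ≤ Real.exp 1 * upperDensWith a A := by
  have he := Real.exp_pos 1
  have hbdd : IsBoundedUnder (· ≤ ·) atTop fun N => wSum a A N / ∑ j ∈ range (N + 1), a j :=
    isBoundedUnder_of ⟨1, fun N => div_le_one_of_le₀
      (sum_le_sum fun j _ => Set.indicator_le_self' (fun j _ => ha j) j)
      (sum_nonneg fun j _ => ha j)⟩
  have hlim : Tendsto (fun t : ℕ => (upperBanachDens A - 1 / t) / Real.exp 1) atTop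
      (𝓝 (upperBanachDens A / Real.exp 1)) := by
    simpa using (tendsto_const_nhds.sub tendsto_one_div_atTop_nhds_zero_nat).div_const (Real.exp 1)
  rw [← div_le_iff₀' he]
  refine le_limsup_of_eventually_exists_ge hbdd hlim ?_
  filter_upwards [h, eventually_gt_atTop 0] with t ⟨N, hN, hρ⟩ ht
  refine ⟨N, hN, le_trans ?_ hρ⟩
  have htR : (0 : ℝ) < t := by exact_mod_cast ht
  calc (upperBanachDens A - 1 / t) / Real.exp 1
      ≤ (limsupWindowCount A t / t - 1 / t) / Real.exp 1 := by
        gcongr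
        exact upperBanachDens_le_div A ht
    _ = (limsupWindowCount A t - 1) / (t * Real.exp 1) := by field_simp

lemma inv_le_inv_mul_one_add_inv {b c : ℝ} (hb : 0 < b) (hc : 0 < c) (hcb : c ≤ b + 1) :
    b⁻¹ ≤ c⁻¹ * (1 + b⁻¹) := by
  rw [show c⁻¹ * (1 + b⁻¹) = (b + 1) / c * b⁻¹ by field_simp]
  exact le_mul_of_one_le_left (by positivity) ((one_le_div hc).2 hcb)

def HasCubicGaps (M : ℕ → ℕ) : Prop := ∀ t, M t + (t + 1) ^ 3 ≤ M (t + 1)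

def blockIndex (M : ℕ → ℕ) (n : ℕ) : ℕ := Nat.findGreatest (fun t => M t ≤ n) n

noncomputable def blockRatio (M : ℕ → ℕ) (n : ℕ) : ℝ := (blockIndex M n : ℝ)⁻¹

section Blocks

variable {M : ℕ → ℕ}

lemma blockIndex_mono : Monotone (blockIndex M) := fun _ _ h =>
  Nat.findGreatest_mono (fun _ ht => ht.trans h) h

lemma le_blockIndex (hM : StrictMono M) {t n : ℕ} (h : M t ≤ n) : t ≤ blockIndex M n :=
  Nat.le_findGreatest ((hM.id_le t).trans h) h

lemma blockIndex_eq (hM : StrictMono M) {t n : ℕ} (h1 : M t ≤ n) (h2 : n < M (t + 1)) :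
    blockIndex M n = t := by
  refine le_antisymm ?_ (le_blockIndex hM h1)
  by_contra! h
  have hspec : M (blockIndex M n) ≤ n :=
    Nat.findGreatest_spec (P := fun t => M t ≤ n) ((hM.id_le t).trans h1) h1
  exact ((hM.monotone h).trans hspec).not_gt h2

lemma blockIndex_succ_le (hM : StrictMono M) (hM0 : M 0 = 0) (n : ℕ) :
    blockIndex M (n + 1) ≤ blockIndex M n + 1 := by
  by_contra! h
  have hspec : M (blockIndex M (n + 1)) ≤ n + 1 :=
    Nat.findGreatest_spec (P := fun t => M t ≤ n + 1) (Nat.zero_le _) (by omega)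
  have := le_blockIndex hM (Nat.lt_succ_iff.1 ((hM h).trans_le hspec))
  omega

lemma blockRatio_eq (hM : StrictMono M) {t n : ℕ} (h1 : M t ≤ n) (h2 : n < M (t + 1)) :
    blockRatio M n = (t : ℝ)⁻¹ := by
  rw [blockRatio, blockIndex_eq hM h1 h2]

lemma strictMono_of_gap (hgap : HasCubicGaps M) : StrictMono M :=
  strictMono_nat_of_lt_succ fun t => by
    have := hgap t
    have : 0 < (t + 1) ^ 3 := by positivity
    omega

lemma one_le_blockIndex (hgap : HasCubicGaps M) (hM1 : M 1 = 1) {n : ℕ} (hn : 1 ≤ n) :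
    1 ≤ blockIndex M n :=
  le_blockIndex (strictMono_of_gap hgap) (by rw [hM1]; exact hn)

lemma blockRatio_succ_pos (hgap : HasCubicGaps M) (hM1 : M 1 = 1) (n : ℕ) :
    0 < blockRatio M (n + 1) :=
  inv_pos.2 (Nat.cast_pos.2 (one_le_blockIndex hgap hM1 n.succ_pos))

lemma monotone_ratioWeight_blockRatio (hgap : HasCubicGaps M) (hM1 : M 1 = 1) :
    Monotone (ratioWeight (blockRatio M)) := by
  have hM := strictMono_of_gap hgap
  have hM0 : M 0 = 0 := by have := hgap 0; norm_num at this; omega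
  have hb (n : ℕ) : (0 : ℝ) < blockIndex M (n + 1) :=
    Nat.cast_pos.2 (one_le_blockIndex hgap hM1 n.succ_pos)
  refine monotone_ratioWeight (blockRatio_succ_pos hgap hM1) ?_ fun n =>
    inv_le_inv_mul_one_add_inv (hb n) (hb (n + 1))
      (by exact_mod_cast blockIndex_succ_le hM hM0 (n + 1))
  rw [blockRatio_eq hM (t := 1) hM1.le (by have := hgap 1; omega)]
  simp

lemma le_ratioWeight_blockRatio (hgap : HasCubicGaps M) (hM1 : M 1 = 1) {t : ℕ}
    (ht : 0 < t) :
    (t : ℝ) ≤ ratioWeight (blockRatio M) (M (t + 1)) := by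
  have hM := strictMono_of_gap hgap
  have hMt : 1 ≤ M t := hM1 ▸ hM.monotone ht
  set L := M (t + 1) - M t
  have hL : ((t : ℝ) + 1) ^ 3 ≤ L := by
    have := hgap t
    exact_mod_cast (show (t + 1) ^ 3 ≤ L by omega)
  have hsplit : M (t + 1) = M t - 1 + L + 1 := by have := hgap t; omega
  have hprod : ratioProd (blockRatio M) (M t - 1 + L) =
      ratioProd (blockRatio M) (M t - 1) * (1 + (t : ℝ)⁻¹) ^ L :=
    ratioProd_add_of_eqOn _ fun j hj => by
      rw [mem_Ioc] at hj
      exact blockRatio_eq hM (by omega) (by omega)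
  have hbern : (L : ℝ) * (t : ℝ)⁻¹ ≤ (1 + (t : ℝ)⁻¹) ^ L := by
    have := one_add_mul_le_pow (a := (t : ℝ)⁻¹)
      (by linarith [(by positivity : (0 : ℝ) ≤ (t : ℝ)⁻¹)]) L
    linarith
  have htR : (0 : ℝ) < t := by exact_mod_cast ht
  rw [hsplit, ratioWeight, hprod, ← hsplit, blockRatio_eq hM le_rfl (hM (lt_add_one _))]
  push_cast
  calc (t : ℝ) ≤ ((t : ℝ) + 1)⁻¹ * (((t : ℝ) + 1) ^ 3 * (t : ℝ)⁻¹) := by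
        rw [← sub_nonneg]
        field_simp
        nlinarith
    _ ≤ ((t : ℝ) + 1)⁻¹ * (L * (t : ℝ)⁻¹) := by gcongr
    _ ≤ ((t : ℝ) + 1)⁻¹ * (1 + (t : ℝ)⁻¹) ^ L := mul_le_mul_of_nonneg_left hbern (by positivity)
    _ ≤ _ := mul_le_mul_of_nonneg_left (le_mul_of_one_le_left (by positivity)
        (one_le_ratioProd (blockRatio_succ_pos hgap hM1) _)) (by positivity)

lemma memS_ratioWeight_blockRatio (hgap : HasCubicGaps M) (hM1 : M 1 = 1) :
    memS (ratioWeight (blockRatio M)) := by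
  have hM := strictMono_of_gap hgap
  have hv := blockRatio_succ_pos hgap hM1
  have hmono := monotone_ratioWeight_blockRatio hgap hM1
  refine ⟨ratioWeight_pos hv, hmono, ?_, fun m n hm hmn => ?_, ?_⟩
  · refine tendsto_atTop_atTop_of_monotone hmono fun b => ?_
    obtain ⟨t, ht⟩ := exists_nat_ge b
    exact ⟨M (t + 2), ht.trans ((le_ratioWeight_blockRatio hgap hM1 t.succ_pos).trans' (by simp))⟩
  · obtain ⟨m, rfl⟩ := Nat.exists_eq_add_of_le' hm
    obtain ⟨n, rfl⟩ := Nat.exists_eq_add_of_le' (hm.trans hmn)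
    rw [vSeq_ratioWeight hv, vSeq_ratioWeight hv]
    exact inv_anti₀ (Nat.cast_pos.2 (one_le_blockIndex hgap hM1 hm))
      (Nat.cast_le.2 (blockIndex_mono hmn))
  · have hblk : Tendsto (blockIndex M) atTop atTop :=
      tendsto_atTop_atTop.2 fun t => ⟨M t, fun n hn => le_blockIndex hM hn⟩
    refine (tendsto_inv_atTop_zero.comp (tendsto_natCast_atTop_atTop.comp hblk)).congr' ?_
    filter_upwards [eventually_ge_atTop 1] with n hn
    obtain ⟨n, rfl⟩ := Nat.exists_eq_add_of_le' hn
    exact (vSeq_ratioWeight hv n).symm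

end Blocks

lemma exists_hasCubicGaps_windows_lt (k : ℕ → ℕ → ℕ → ℕ) :
    ∃ M : ℕ → ℕ, M 1 = 1 ∧ HasCubicGaps M ∧
      ∀ t m, m < t → k t m (M t) + t < M (t + 1) := by
  let next (t K : ℕ) : ℕ := (range t).sup (fun m => k t m K + t) + K + (t + 1) ^ 3
  let M : ℕ → ℕ := fun t => Nat.rec 0 next t
  have hM (t : ℕ) : M (t + 1) = next t (M t) := rfl
  refine ⟨M, by simp [next, M], fun t => by rw [hM]; dsimp only [next]; omega, fun t m hm => ?_⟩
  have := le_sup (f := fun m => k t m (M t) + t) (mem_range.2 hm)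
  have : 0 < (t + 1) ^ 3 := by positivity
  rw [hM]
  dsimp only [next]
  omega

/-- For any sequence `(A_n)` of subsets of `ℕ` there exists `a ∈ S` such that
`B̄d(A_n) ≤ e · d̄_a(A_n)` for every `n`. -/
theorem stmt_2 (A : ℕ → Set ℕ) :
    ∃ a : ℕ → ℝ, memS a ∧
      ∀ n : ℕ, upperBanachDens (A n) ≤ Real.exp 1 * upperDensWith a (A n) := by
  have hpick (t n K : ℕ) : ∃ k, K ≤ k ∧ limsupWindowCount (A n) t - 1 < windowCount (A n) t k :=
    frequently_atTop.1
      (frequently_lt_of_lt_limsup (isCoboundedUnder_windowCount _ t) (sub_one_lt _)) K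
  choose k hkK hk using hpick
  obtain ⟨M, hM1, hgap, hwin⟩ := exists_hasCubicGaps_windows_lt k
  have hM := strictMono_of_gap hgap
  have hv := blockRatio_succ_pos hgap hM1
  refine ⟨ratioWeight (blockRatio M), memS_ratioWeight_blockRatio hgap hM1, fun n => ?_⟩
  refine upperBanachDens_le_exp_mul_upperDensWith (fun j => (ratioWeight_pos hv j).le) ?_
  filter_upwards [eventually_gt_atTop n] with t hnt
  have hMk := hkK t n (M t)
  refine ⟨k t n (M t) + t, by have := hM.id_le t; omega, ?_⟩
  calc (limsupWindowCount (A n) t - 1) / (t * Real.exp 1)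
      ≤ windowCount (A n) t (k t n (M t)) / (t * Real.exp 1) := by gcongr; exact (hk t n _).le
    _ ≤ _ := windowCount_div_le_wSum_div hv (monotone_ratioWeight_blockRatio hgap hM1)
        (by omega) (fun j hj => by
          rw [mem_Ioc] at hj
          exact blockRatio_eq hM (by omega) (by have := hwin t n hnt; omega)) _
end

section
/- Let A be an upper Furstenberg family, with decomposition A = ∪_{δ∈D} A_δ, satisfying: (1) for every δ' ∈ D there exists δ ∈ D such that for all k ≥ 0 and all A ∈ A_{δ'}, one has A − k ∈ A_δ; (2) for every A ∈ A there exists δ ∈ D such that {k ≥ 0 : A ∩ (A − k) ∈ A_δ} has bounded gaps. If a bounded operator T on a separable infinite-dimensional Banach space X is A-hypercyclic, then for every n ≥ 1 the n-fold product T × ⋯ × T is A-hypercyclic. -/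
open Filter Topology

/-
Everything happens inside the orbit of one `𝒜`-hypercyclic vector `x`. Condition (2)
applied to `N(x, P ∩ T⁻ᵍ Q)` makes every hitting set `N(P, Q) = {n : T^n P ∩ Q ≠ ∅}` syndetic,
and for an operator this forces `N(P, Q)` to be thick: perturb a point of `P` whose orbit gets
very small by a point whose first iterates are small and which lands in `Q` later. For
`U₁, U₂`, a syndetic set `K ⊆ {k : A ∩ (A - k) ∈ 𝒜_δ}`, `A = N(x, U₁ ∩ T⁻ˢ U₂)`, then meets
every thick set, so every open set of `X × X` contains a pair of orbit points `(T^σ x, T^τ x)`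
with `N(T^σ x, U₁) ∩ N(T^τ x, U₂) ⊇ (A ∩ (A - k)) - σ`, which lies in one fixed `𝒜_{δ'}` by
condition (1). Since each `𝒜_{δ,μ}` is determined by finitely many coordinates, these sets of
pairs are dense `G_δ`'s, and Baire's theorem gives an `𝒜`-hypercyclic vector of `T × T`.
Iterating, `T` on `X^(2^k)` is `𝒜`-hypercyclic, and `X^n` is a factor of it for `n ≤ 2^k`.
-/

open Set Metric

def FinitelyDetermined (𝓕 : Set (Set ℕ)) : Prop :=
  ∀ A ∈ 𝓕, ∃ F : Finset ℕ, ∀ B : Set ℕ, A ∩ ↑F ⊆ B → B ∈ 𝓕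

def Thick (K : Set ℕ) : Prop :=
  ∀ L : ℕ, ∃ e : ℕ, ∀ r ≤ L, e + r ∈ K

def hitSet {Y : Type*} [NormedAddCommGroup Y] [NormedSpace ℂ Y] (S : Y →L[ℂ] Y)
    (P Q : Set Y) : Set ℕ :=
  {n : ℕ | ∃ p ∈ P, (S ^ n) p ∈ Q}

theorem FinitelyDetermined.isUpperSet {𝓕 : Set (Set ℕ)} (h : FinitelyDetermined 𝓕) :
    IsUpperSet 𝓕 := by
  intro A B hAB hA
  obtain ⟨F, hF⟩ := h A hA
  exact hF B (inter_subset_left.trans hAB)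

theorem Syndetic.nonempty {K : Set ℕ} (hK : Syndetic K) : K.Nonempty :=
  let ⟨_, hm⟩ := hK
  (hm 0).mono inter_subset_left

theorem Syndetic.mono {K L : Set ℕ} (hK : Syndetic K) (hKL : K ⊆ L) : Syndetic L :=
  let ⟨m, hm⟩ := hK
  ⟨m, fun n => (hm n).mono (inter_subset_inter_left _ hKL)⟩

theorem Syndetic.of_forall_add_mem {K L : Set ℕ} (hK : Syndetic K) (g : ℕ)
    (h : ∀ k ∈ K, k + g ∈ L) : Syndetic L := by
  obtain ⟨m, hm⟩ := hK
  refine ⟨m + g, fun n => ?_⟩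
  obtain ⟨k, hk, hnk, hkm⟩ := hm n
  exact ⟨k + g, h k hk, by omega, by omega⟩

theorem Syndetic.inter_shiftSet_nonempty {K J : Set ℕ} (hK : Syndetic K) (hJ : Thick J)
    (s : ℕ) : (K ∩ shiftSet J s).Nonempty := by
  obtain ⟨m, hm⟩ := hK
  obtain ⟨e, he⟩ := hJ (m + s)
  obtain ⟨k, hk, hek, hkm⟩ := hm e
  have hks := he (k + s - e) (by omega)
  rw [show e + (k + s - e) = k + s by omega] at hks
  exact ⟨k, hk, hks⟩

theorem Thick.nonempty {K : Set ℕ} (hK : Thick K) : K.Nonempty :=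
  let ⟨e, he⟩ := hK 0
  ⟨e, he 0 le_rfl⟩

theorem exists_ge_mem_of_syndetic {A : Set ℕ}
    (hA : Syndetic {k : ℕ | (A ∩ shiftSet A k).Nonempty}) (N : ℕ) : ∃ t ≥ N, t ∈ A := by
  obtain ⟨m, hm⟩ := hA
  obtain ⟨k, ⟨τ, -, hτ⟩, hNk, -⟩ := hm N
  exact ⟨τ + k, by omega, hτ⟩

theorem dist_add_le_norm_add_dist {E : Type*} [SeminormedAddCommGroup E] (a b c : E) :
    dist (a + b) c ≤ ‖a‖ + dist b c := by
  rw [dist_eq_norm, dist_eq_norm, add_sub_assoc]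
  exact norm_add_le _ _

section Operator

variable {Y : Type*} [NormedAddCommGroup Y] [NormedSpace ℂ Y]

theorem pow_apply_pow (S : Y →L[ℂ] Y) (a b : ℕ) (y : Y) :
    (S ^ a) ((S ^ b) y) = (S ^ (a + b)) y := by
  rw [pow_add]
  rfl

theorem retSet_mono (S : Y →L[ℂ] Y) (y : Y) {U V : Set Y} (hUV : U ⊆ V) :
    retSet S y U ⊆ retSet S y V :=
  fun _ ht => hUV ht

theorem retSet_prodMap_prod (S : Y →L[ℂ] Y) (y : Y × Y) (U₁ U₂ : Set Y) :
    retSet (S.prodMap S) y (U₁ ×ˢ U₂) = retSet S y.1 U₁ ∩ retSet S y.2 U₂ := by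
  have hpow : ∀ t, (S.prodMap S) ^ t = (S ^ t).prodMap (S ^ t) := by
    intro t
    induction t with
    | zero => rfl
    | succ t ih => rw [pow_succ, ih, pow_succ]; rfl
  ext t
  simp [retSet, hpow]

theorem FinitelyDetermined.isOpen_setOf_retSet_mem {𝓕 : Set (Set ℕ)}
    (h : FinitelyDetermined 𝓕) (S : Y →L[ℂ] Y) {U : Set Y} (hU : IsOpen U) :
    IsOpen {y : Y | retSet S y U ∈ 𝓕} := by
  refine isOpen_iff_mem_nhds.2 fun y hy => ?_
  obtain ⟨F, hF⟩ := h _ hy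
  have hnear : ∀ᶠ z in 𝓝 y, ∀ t ∈ F, t ∈ retSet S y U → (S ^ t) z ∈ U :=
    (eventually_all_finset F).2 fun t _ => eventually_imp_distrib_left.2 fun ht =>
      (S ^ t).continuous.continuousAt.preimage_mem_nhds (hU.mem_nhds ht)
  filter_upwards [hnear] with z hz
  exact hF _ fun t ⟨ht, htF⟩ => hz t htF ht

theorem isOpen_setOf_forall_norm_pow_lt (S : Y →L[ℂ] Y) (n : ℕ) (ε : ℝ) :
    IsOpen {y : Y | ∀ j ≤ n, ‖(S ^ j) y‖ < ε} := by
  have h : {y : Y | ∀ j ≤ n, ‖(S ^ j) y‖ < ε} = ⋂ j ∈ Iic n, {y | ‖(S ^ j) y‖ < ε} := by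
    ext
    simp
  rw [h]
  exact (finite_Iic n).isOpen_biInter fun j _ =>
    isOpen_lt (continuous_norm.comp (S ^ j).continuous) continuous_const

theorem thick_hitSet {S : Y →L[ℂ] Y}
    (hsyn : ∀ P Q : Set Y, IsOpen P → P.Nonempty → IsOpen Q → Q.Nonempty →
      Syndetic (hitSet S P Q))
    {V W : Set Y} (hV : IsOpen V) (hV' : V.Nonempty) (hW : IsOpen W) (hW' : W.Nonempty) :
    Thick (hitSet S V W) := by
  intro L
  obtain ⟨v, hv⟩ := hV'
  obtain ⟨w, hw⟩ := hW'
  obtain ⟨ρ, hρ, hvρ⟩ := isOpen_iff.1 hV v hv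
  obtain ⟨ρ', hρ', hwρ'⟩ := isOpen_iff.1 hW w hw
  set ε := min ρ ρ' / 2 with hε_def
  have hε : 0 < ε := by positivity
  let Ω : ℕ → Set Y := fun n => {y | ∀ j ≤ n, ‖(S ^ j) y‖ < ε}
  have hΩ : ∀ n, (Ω n).Nonempty := fun n => ⟨0, by simp [Ω, hε]⟩
  obtain ⟨m, hm⟩ := hsyn (Ω L) (ball w ε) (isOpen_setOf_forall_norm_pow_lt S L ε) (hΩ L)
    isOpen_ball ⟨w, mem_ball_self hε⟩
  obtain ⟨d, z, hz, hdz⟩ := (hsyn (ball v ε) (Ω (L + m)) isOpen_ball ⟨v, mem_ball_self hε⟩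
    (isOpen_setOf_forall_norm_pow_lt S (L + m) ε) (hΩ _)).nonempty
  obtain ⟨t, ⟨u, hu, htu⟩, hdt, htm⟩ := hm (d + L)
  -- `S^d z` stays small for `L + m` steps and `u` for `L` steps, so `z + S^(L-r) u` starts
  -- near `v` and is near `S^t u`, hence near `w`, at time `t - L + r`
  refine ⟨t - L, fun r hr => ⟨z + (S ^ (L - r)) u, hvρ ?_, hwρ' ?_⟩⟩
  · calc dist (z + (S ^ (L - r)) u) v ≤ ‖(S ^ (L - r)) u‖ + dist z v := by
          rw [add_comm]; exact dist_add_le_norm_add_dist _ _ _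
      _ < ε + ε := add_lt_add (hu _ (by omega)) hz
      _ ≤ ρ := by rw [hε_def]; linarith [min_le_left ρ ρ']
  · have hsplit : (S ^ (t - L + r)) (z + (S ^ (L - r)) u)
        = (S ^ (t - L - d + r)) ((S ^ d) z) + (S ^ t) u := by
      rw [map_add, pow_apply_pow, pow_apply_pow]
      congr 3 <;> omega
    calc dist ((S ^ (t - L + r)) (z + (S ^ (L - r)) u)) w
        ≤ ‖(S ^ (t - L - d + r)) ((S ^ d) z)‖ + dist ((S ^ t) u) w := by
          rw [hsplit]; exact dist_add_le_norm_add_dist _ _ _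
      _ < ε + ε := add_lt_add (hdz _ (by omega)) htu
      _ ≤ ρ' := by rw [hε_def]; linarith [min_le_right ρ ρ']

end Operator

section ReturnSets

variable {Y : Type*} [NormedAddCommGroup Y] [NormedSpace ℂ Y] {𝒜 : Set (Set ℕ)}
  {S : Y →L[ℂ] Y} {x : Y}

theorem hitSet_nonempty (hx : ∀ U : Set Y, IsOpen U → U.Nonempty → retSet S x U ∈ 𝒜)
    (hrec : ∀ A ∈ 𝒜, Syndetic {k : ℕ | (A ∩ shiftSet A k).Nonempty})
    {P Q : Set Y} (hP : IsOpen P) (hP' : P.Nonempty) (hQ : IsOpen Q) (hQ' : Q.Nonempty) :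
    (hitSet S P Q).Nonempty := by
  obtain ⟨σ, -, hσ⟩ := exists_ge_mem_of_syndetic (hrec _ (hx P hP hP')) 0
  obtain ⟨τ, hστ, hτ⟩ := exists_ge_mem_of_syndetic (hrec _ (hx Q hQ hQ')) σ
  refine ⟨τ - σ, (S ^ σ) x, hσ, ?_⟩
  rwa [pow_apply_pow, Nat.sub_add_cancel hστ]

theorem syndetic_hitSet (hx : ∀ U : Set Y, IsOpen U → U.Nonempty → retSet S x U ∈ 𝒜)
    (hrec : ∀ A ∈ 𝒜, Syndetic {k : ℕ | (A ∩ shiftSet A k).Nonempty})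
    {P Q : Set Y} (hP : IsOpen P) (hP' : P.Nonempty) (hQ : IsOpen Q) (hQ' : Q.Nonempty) :
    Syndetic (hitSet S P Q) := by
  obtain ⟨g, p, hp, hgp⟩ := hitSet_nonempty hx hrec hP hP' hQ hQ'
  have hZ := hrec _ (hx (P ∩ (S ^ g) ⁻¹' Q) (hP.inter (hQ.preimage (S ^ g).continuous))
    ⟨p, hp, hgp⟩)
  refine hZ.of_forall_add_mem g fun k ⟨τ, hτ, hτk⟩ => ⟨(S ^ τ) x, hτ.1, ?_⟩
  rw [pow_apply_pow, show k + g + τ = g + (τ + k) by omega, ← pow_apply_pow]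
  exact hτk.2

theorem exists_dense_retSet_prodMap_mem {D : Type*} {Adelta : D → Set (Set ℕ)}
    (hAup : ∀ δ, IsUpperSet (Adelta δ)) (hempty : ∅ ∉ 𝒜)
    (h1 : ∀ δ' : D, ∃ δ : D, ∀ k : ℕ, ∀ A ∈ Adelta δ', shiftSet A k ∈ Adelta δ)
    (h2 : ∀ A ∈ 𝒜, ∃ δ : D, Syndetic {k : ℕ | A ∩ shiftSet A k ∈ Adelta δ})
    (hx : ∀ U : Set Y, IsOpen U → U.Nonempty → retSet S x U ∈ 𝒜)
    (hthick : ∀ V W : Set Y, IsOpen V → V.Nonempty → IsOpen W → W.Nonempty →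
      Thick (hitSet S V W))
    {U₁ U₂ : Set Y} (hU₁ : IsOpen U₁) (hU₁' : U₁.Nonempty) (hU₂ : IsOpen U₂)
    (hU₂' : U₂.Nonempty) :
    ∃ δ, Dense {y : Y × Y | retSet (S.prodMap S) y (U₁ ×ˢ U₂) ∈ Adelta δ} := by
  obtain ⟨s, p, hp, hsp⟩ := (hthick U₁ U₂ hU₁ hU₁' hU₂ hU₂').nonempty
  set A := retSet S x (U₁ ∩ (S ^ s) ⁻¹' U₂)
  obtain ⟨δ₀, hK⟩ := h2 A (hx _ (hU₁.inter (hU₂.preimage (S ^ s).continuous)) ⟨p, hp, hsp⟩)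
  obtain ⟨δ, hδ⟩ := h1 δ₀
  refine ⟨δ, dense_iff_inter_open.2 fun W hW ⟨q, hq⟩ => ?_⟩
  obtain ⟨V₁, V₂, hV₁, hV₂, hq₁, hq₂, hVW⟩ := isOpen_prod_iff.1 hW q.1 q.2 hq
  obtain ⟨k, hk, p', hp', hkp'⟩ :=
    hK.inter_shiftSet_nonempty (hthick V₁ V₂ hV₁ ⟨_, hq₁⟩ hV₂ ⟨_, hq₂⟩) s
  obtain ⟨σ, hσ₁, hσ₂⟩ : (retSet S x (V₁ ∩ (S ^ (k + s)) ⁻¹' V₂)).Nonempty :=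
    nonempty_iff_ne_empty.2 fun h => hempty <|
      h ▸ hx _ (hV₁.inter (hV₂.preimage (S ^ (k + s)).continuous)) ⟨p', hp', hkp'⟩
  rw [mem_preimage, pow_apply_pow] at hσ₂
  -- the pair `(S^σ x, S^(k+s+σ) x)` returns to `U₁ × U₂` along `(A ∩ (A - k)) - σ`
  refine ⟨((S ^ σ) x, (S ^ (k + s + σ)) x), hVW ⟨hσ₁, hσ₂⟩, hAup δ ?_ (hδ σ _ hk)⟩
  rintro t ⟨⟨htA₁, -⟩, -, htA₂⟩
  rw [retSet_prodMap_prod]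
  constructor
  · show (S ^ t) ((S ^ σ) x) ∈ U₁
    rwa [pow_apply_pow]
  · show (S ^ t) ((S ^ (k + s + σ)) x) ∈ U₂
    rw [pow_apply_pow, show t + (k + s + σ) = s + (t + σ + k) by omega, ← pow_apply_pow]
    exact htA₂

end ReturnSets

namespace AHC

variable {𝒜 : Set (Set ℕ)}

theorem of_forall_dense {D M : Type*} [Countable M] {fam : D → M → Set (Set ℕ)}
    {Adelta : D → Set (Set ℕ)} (hAdelta : ∀ δ : D, Adelta δ = ⋂ μ : M, fam δ μ)
    (hi : ∀ δ μ, FinitelyDetermined (fam δ μ)) (hsub : ∀ δ, Adelta δ ⊆ 𝒜)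
    (hup : IsUpperSet 𝒜) {Z : Type*} [NormedAddCommGroup Z] [NormedSpace ℂ Z]
    [CompleteSpace Z] [SecondCountableTopology Z] (R : Z →L[ℂ] Z)
    (h : ∀ U : Set Z, IsOpen U → U.Nonempty → ∃ δ, Dense {z | retSet R z U ∈ Adelta δ}) :
    AHC 𝒜 R := by
  obtain ⟨b, hbc, hb₀, hb⟩ := TopologicalSpace.exists_countable_basis Z
  have := hbc.to_subtype
  choose δ hδ using fun U : b =>
    h U (hb.isOpen U.2) (nonempty_iff_ne_empty.2 fun h => hb₀ (h ▸ U.2))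
  have hmem : ∀ (U : b) z, (∀ μ, retSet R z U ∈ fam (δ U) μ) → retSet R z U ∈ Adelta (δ U) :=
    fun U z hz => (hAdelta _).symm ▸ mem_iInter.2 hz
  have hG : Dense (⋂ q : b × M, {z | retSet R z q.1 ∈ fam (δ q.1) q.2}) :=
    dense_iInter_of_isOpen (fun q => (hi _ _).isOpen_setOf_retSet_mem R (hb.isOpen q.1.2))
      fun q => (hδ q.1).mono fun z hz => mem_iInter.1 ((hAdelta _) ▸ hz) q.2
  obtain ⟨z, hz⟩ := hG.nonempty
  refine ⟨z, fun V hV ⟨v, hv⟩ => ?_⟩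
  obtain ⟨U, hU, -, hUV⟩ := hb.exists_subset_of_mem_open hv hV
  exact hup (retSet_mono R z hUV)
    (hsub _ (hmem ⟨U, hU⟩ z fun μ => mem_iInter.1 hz (⟨U, hU⟩, μ)))

theorem prodMap_self {D M : Type*} [Countable M] {fam : D → M → Set (Set ℕ)}
    {Adelta : D → Set (Set ℕ)} (hAdelta : ∀ δ : D, Adelta δ = ⋂ μ : M, fam δ μ)
    (hi : ∀ δ μ, FinitelyDetermined (fam δ μ)) (hsub : ∀ δ, Adelta δ ⊆ 𝒜)
    (hempty : ∅ ∉ 𝒜) (hup : IsUpperSet 𝒜)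
    (h1 : ∀ δ' : D, ∃ δ : D, ∀ k : ℕ, ∀ A ∈ Adelta δ', shiftSet A k ∈ Adelta δ)
    (h2 : ∀ A ∈ 𝒜, ∃ δ : D, Syndetic {k : ℕ | A ∩ shiftSet A k ∈ Adelta δ})
    {Y : Type*} [NormedAddCommGroup Y] [NormedSpace ℂ Y] [CompleteSpace Y]
    [SecondCountableTopology Y] {S : Y →L[ℂ] Y} (hS : AHC 𝒜 S) :
    AHC 𝒜 (S.prodMap S) := by
  obtain ⟨x, hx⟩ := hS
  have hAup : ∀ δ, IsUpperSet (Adelta δ) := fun δ =>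
    (hAdelta δ).symm ▸ isUpperSet_iInter fun μ => (hi δ μ).isUpperSet
  have hrec : ∀ A ∈ 𝒜, Syndetic {k : ℕ | (A ∩ shiftSet A k).Nonempty} := fun A hA =>
    let ⟨δ, hδ⟩ := h2 A hA
    hδ.mono fun _ hk => nonempty_iff_ne_empty.2 fun h => hempty (h ▸ hsub δ hk)
  have hthick : ∀ V W : Set Y, IsOpen V → V.Nonempty → IsOpen W → W.Nonempty →
      Thick (hitSet S V W) :=
    fun _ _ => thick_hitSet fun _ _ => syndetic_hitSet hx hrec
  refine of_forall_dense hAdelta hi hsub hup _ fun U hU ⟨q, hq⟩ => ?_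
  obtain ⟨U₁, U₂, hU₁, hU₂, hq₁, hq₂, hU₁₂⟩ := isOpen_prod_iff.1 hU q.1 q.2 hq
  obtain ⟨δ, hδ⟩ :=
    exists_dense_retSet_prodMap_mem hAup hempty h1 h2 hx hthick hU₁ ⟨_, hq₁⟩ hU₂ ⟨_, hq₂⟩
  exact ⟨δ, hδ.mono fun y hy => hAup δ (retSet_mono _ y hU₁₂) hy⟩

theorem of_semiconj {Y Z : Type*} [NormedAddCommGroup Y] [NormedSpace ℂ Y]
    [NormedAddCommGroup Z] [NormedSpace ℂ Z] {SY : Y →L[ℂ] Y} {SZ : Z →L[ℂ] Z} {Φ : Y → Z}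
    (hΦ : Continuous Φ) (hΦs : Function.Surjective Φ) (hsemi : Function.Semiconj Φ SY SZ)
    (h : AHC 𝒜 SY) : AHC 𝒜 SZ := by
  obtain ⟨x, hx⟩ := h
  refine ⟨Φ x, fun U hU hU' => ?_⟩
  have hret : retSet SZ (Φ x) U = retSet SY x (Φ ⁻¹' U) := by
    ext t
    simp only [retSet, mem_ofPred_eq, mem_preimage, FunLike.coe_pow_eq_iterate,
      (hsemi.iterate_right t).eq]
  rw [hret]
  exact hx _ (hU.preimage hΦ) (hU'.preimage hΦs)

variable {X : Type*} [NormedAddCommGroup X] [NormedSpace ℂ X] {T : X →L[ℂ] X}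

theorem nfold_one (hT : AHC 𝒜 T) : AHC 𝒜 (nfold T 1) :=
  hT.of_semiconj (Φ := fun x _ => x) (continuous_pi fun _ => continuous_id)
    (fun v => ⟨v 0, funext fun i => by rw [Subsingleton.elim i 0]⟩)
    (fun x => by ext; simp [nfold])

theorem nfold_add_self {n : ℕ} (hT : AHC 𝒜 ((nfold T n).prodMap (nfold T n))) :
    AHC 𝒜 (nfold T (n + n)) :=
  hT.of_semiconj (Fin.continuous_append n n) (Fin.appendEquiv n n).surjective fun p => by
    ext i
    refine Fin.addCases (fun j => ?_) (fun j => ?_) i <;> simp [nfold, -Fin.natAdd_eq_addNat]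

theorem nfold_of_le {m n : ℕ} (hmn : m ≤ n) (hT : AHC 𝒜 (nfold T n)) :
    AHC 𝒜 (nfold T m) :=
  hT.of_semiconj (Φ := fun w => w ∘ Fin.castLE hmn)
    (continuous_pi fun i => continuous_apply _) (Fin.castLE_injective hmn).surjective_comp_right
    (fun w => by ext; simp [nfold])

end AHC

theorem stmt_9_general {D : Type*} {M : Type*} [Countable M]
    (fam : D → M → Set (Set ℕ)) (Adelta : D → Set (Set ℕ)) (𝒜 : Set (Set ℕ))
    (hAdelta : ∀ δ : D, Adelta δ = ⋂ μ : M, fam δ μ)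
    (h𝒜 : 𝒜 = ⋃ δ : D, Adelta δ)
    (hempty : ∅ ∉ 𝒜)
    (hup : ∀ A B : Set ℕ, A ∈ 𝒜 → A ⊆ B → B ∈ 𝒜)
    (hi : ∀ (δ : D) (μ : M), ∀ A ∈ fam δ μ, ∃ F : Finset ℕ,
      ∀ B : Set ℕ, A ∩ ↑F ⊆ B → B ∈ fam δ μ)
    (h1 : ∀ δ' : D, ∃ δ : D, ∀ k : ℕ, ∀ A ∈ Adelta δ', shiftSet A k ∈ Adelta δ)
    (h2 : ∀ A ∈ 𝒜, ∃ δ : D, Syndetic {k : ℕ | A ∩ shiftSet A k ∈ Adelta δ})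
    {X : Type*} [NormedAddCommGroup X] [NormedSpace ℂ X] [CompleteSpace X]
    [TopologicalSpace.SeparableSpace X]
    (T : X →L[ℂ] X) (hT : AHC 𝒜 T) (n : ℕ) :
    AHC 𝒜 (nfold T n) := by
  have hsub : ∀ δ, Adelta δ ⊆ 𝒜 := fun δ => h𝒜 ▸ subset_iUnion Adelta δ
  have hdouble : ∀ k, AHC 𝒜 (nfold T (2 ^ k)) := by
    intro k
    induction k with
    | zero => exact hT.nfold_one
    | succ k ih =>
      rw [pow_succ, mul_two]
      exact (ih.prodMap_self hAdelta hi hsub hempty (fun A B hAB hA => hup A B hA hAB) h1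
        h2).nfold_add_self
  exact (hdouble n).nfold_of_le n.lt_two_pow_self.le

/-- If `𝒜 = ⋃_δ 𝒜_δ` is an upper Furstenberg family satisfying the two shift/syndeticity
conditions, and `T` is `𝒜`-hypercyclic, then every `n`-fold product `T × ⋯ × T` (`n ≥ 1`)
is `𝒜`-hypercyclic. -/
theorem stmt_9 {D : Type*} {M : Type*} [Countable M]
    (fam : D → M → Set (Set ℕ)) (Adelta : D → Set (Set ℕ)) (𝒜 : Set (Set ℕ))
    (hAdelta : ∀ δ : D, Adelta δ = ⋂ μ : M, fam δ μ)
    (h𝒜 : 𝒜 = ⋃ δ : D, Adelta δ)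
    (hne : 𝒜.Nonempty) (hempty : ∅ ∉ 𝒜)
    (hup : ∀ A B : Set ℕ, A ∈ 𝒜 → A ⊆ B → B ∈ 𝒜)
    (hi : ∀ (δ : D) (μ : M), ∀ A ∈ fam δ μ, ∃ F : Finset ℕ,
      ∀ B : Set ℕ, A ∩ ↑F ⊆ B → B ∈ fam δ μ)
    (hii : ∀ A ∈ 𝒜, ∃ δ : D, ∀ n : ℕ, shiftSet A n ∈ Adelta δ)
    (h1 : ∀ δ' : D, ∃ δ : D, ∀ k : ℕ, ∀ A ∈ Adelta δ', shiftSet A k ∈ Adelta δ)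
    (h2 : ∀ A ∈ 𝒜, ∃ δ : D, Syndetic {k : ℕ | A ∩ shiftSet A k ∈ Adelta δ})
    {X : Type*} [NormedAddCommGroup X] [NormedSpace ℂ X] [CompleteSpace X]
    [TopologicalSpace.SeparableSpace X] (hX : ¬FiniteDimensional ℂ X)
    (T : X →L[ℂ] X) (hT : AHC 𝒜 T) (n : ℕ) (hn : 1 ≤ n) :
    AHC 𝒜 (nfold T n) :=
  stmt_9_general fam Adelta 𝒜 hAdelta h𝒜 hempty hup hi h1 h2 T hT n
end
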